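/- Let Ω' be a topologically transitive one-sided subshift of finite type over a finite alphabet 𝒜, and suppose ℙ is a regular g-measure on Ω'. Then ℙ satisfies condition FE if and only if there exists r ∈ ℕ with the following property: for every y ∈ Ω' there exists t ∈ {1,…,r} such that T^t y has more than one preimage in Ω' under T. -/

import Mathlib

/-!
Writing `ℙ[x₁ⁿ⁺¹] ≈ g(x) ℙ[(Tx)₁ⁿ]` and telescoping along an orbit, `ℙ[y₁ⁿ⁺ᵗ]` equals
`∏_{k<t} g(Tᵏy) · ℙ[(Tᵗy)₁ⁿ]` up to factors `(1 ± ε)ᵗ`. Since the `g`-values of the preimages of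
a point sum to `1`, `g(Tᵏy) = 1` when `Tᵏ⁺¹y` has a single preimage, and `g(Tᵏy) ≤ 1 - min g`
otherwise, with `min g > 0` by compactness of `Ω'`. If every orbit branches within `r` steps, each
block of `r` letters thus costs a fixed factor `< 1`, which is (FE). Conversely, an orbit that does
not branch for `r` steps has cylinders of length `n₀ + r` of measure at least `c θʳ`, with `θ < 1`
as close to `1` as we like, which (FE) forbids for large `r`.
-/

open MeasureTheory Filter Asymptotics
open scoped ENNReal Classical

noncomputable section

namespace ZM

/-- The left shift on one-sided sequences. -/
def shift {A : Type*} (x : ℕ → A) : ℕ → A := fun k => x (k + 1)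

/-- The cylinder set of all sequences starting with the word `a`. -/
def cyl {A : Type*} {n : ℕ} (a : Fin n → A) : Set (ℕ → A) := {x | ∀ i : Fin n, x i = a i}

/-- The word `x_{p+1}^{p+ℓ}` of `x` (0-based: the letters at positions `p, …, p+ℓ-1`). -/
def seg {A : Type*} (y : ℕ → A) (p ℓ : ℕ) : Fin ℓ → A := fun i => y (p + i)

/-- `w` occurs in `x` at (0-based) offset `r`. -/
def matchAt {A : Type*} (x : ℕ → A) {ℓ : ℕ} (w : Fin ℓ → A) (r : ℕ) : Prop :=
  ∀ i : Fin ℓ, x (r + i) = w i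

/-- `w` appears as a substring of `x_1^N`. -/
def appears {A : Type*} (N : ℕ) (x : ℕ → A) {ℓ : ℕ} (w : Fin ℓ → A) : Prop :=
  ∃ r, r + ℓ ≤ N ∧ matchAt x w r

/-- The waiting time `W_ℓ(w, x)`: the least (1-based) position at which `w` occurs in `x`,
`⊤` if `w` never occurs. -/
def W {A : Type*} {ℓ : ℕ} (w : Fin ℓ → A) (x : ℕ → A) : ℕ∞ :=
  sInf {r : ℕ∞ | ∃ n : ℕ, r = (n : ℕ∞) ∧ 1 ≤ n ∧ matchAt x w (n - 1)}

section ZMparsing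

variable {A : Type*}

/-- Length of the Ziv–Merhav word starting at (0-based) position `p` of `y_1^N`, with
database `x_1^N`: the longest prefix of the remaining portion of `y_1^N` appearing as a
substring of `x_1^N`, or a single letter if there is no such prefix. -/
def zmLen (N : ℕ) (x y : ℕ → A) (p : ℕ) : ℕ :=
  max 1 (sSup {ℓ | p + ℓ ≤ N ∧ appears N x (seg y p ℓ)})

/-- Starting position of the `j`-th (0-based) word of the Ziv–Merhav parsing. -/
def zmPos (N : ℕ) (x y : ℕ → A) : ℕ → ℕ
  | 0 => 0
  | j + 1 => zmPos N x y j + zmLen N x y (zmPos N x y j)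

/-- `c_N(y|x)`: the number of words in the Ziv–Merhav parsing of `y_1^N` w.r.t. `x_1^N`. -/
def cN (N : ℕ) (x y : ℕ → A) : ℕ := sInf {c | N ≤ zmPos N x y c}

/-- The Ziv–Merhav estimator `Q̂_N(y, x) = c_N(y|x) ln N / N`. -/
def ZMest (N : ℕ) (x y : ℕ → A) : ℝ := (cN N x y : ℝ) * Real.log N / N

end ZMparsing

section MeasureDefs

variable {A : Type*} [MeasurableSpace A]

/-- The measure of the cylinder of a word, as a real number. -/
def wp (μ : Measure (ℕ → A)) {n : ℕ} (a : Fin n → A) : ℝ := (μ (cyl a)).toReal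

/-- `supp ℙ`: the set of sequences all of whose prefixes have positive measure. -/
def suppSet (μ : Measure (ℕ → A)) : Set (ℕ → A) := {x | ∀ n, 0 < μ (cyl (seg x 0 n))}

/-- Condition (ID): immediate decoupling on the support, with sequence `k`. -/
def CondID (μ : Measure (ℕ → A)) (k : ℕ → ℝ) : Prop :=
  Monotone k ∧ (k =o[atTop] fun n => (n : ℝ)) ∧
    ∀ (n m : ℕ) (a : Fin n → A) (b : Fin m → A), 0 < μ (cyl a) → 0 < μ (cyl b) →
      wp μ (Fin.append a b) ≤ Real.exp (k n) * (wp μ a * wp μ b) ∧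
      (0 < μ (cyl (Fin.append a b)) →
        Real.exp (-k n) * (wp μ a * wp μ b) ≤ wp μ (Fin.append a b))

/-- Condition (FE): fast enough decay, with rate `γp < 0`. -/
def CondFE (μ : Measure (ℕ → A)) (γp : ℝ) : Prop :=
  γp < 0 ∧ ∀ᶠ n : ℕ in atTop, ∀ a : Fin n → A, 0 < μ (cyl a) → wp μ a ≤ Real.exp (γp * n)

/-- Condition (SE): slow enough decay, with rate `γm < 0`. -/
def CondSE (μ : Measure (ℕ → A)) (γm : ℝ) : Prop :=
  γm < 0 ∧ ∀ᶠ n : ℕ in atTop, ∀ a : Fin n → A, 0 < μ (cyl a) → Real.exp (γm * n) ≤ wp μ a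

/-- Condition (KB): Kontoyiannis' bound on waiting times, with sequences `k`, `τ`. -/
def CondKB (μ : Measure (ℕ → A)) (k τ : ℕ → ℝ) : Prop :=
  (k =o[atTop] fun n => (n : ℝ)) ∧ (τ =o[atTop] fun n => (n : ℝ)) ∧
    ∀ (ℓ : ℕ) (a : Fin ℓ → A) (r : ℕ),
      (μ {x | (r : ℕ∞) ≤ W a x}).toReal ≤
        Real.exp (-(Real.exp (-k ℓ) * wp μ a * (⌊((r : ℝ) - 1) / ((ℓ : ℝ) + τ ℓ)⌋ : ℝ)))

/-- Length of the next word of the auxiliary parsing of `y_1^N` starting at position `p`: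
the shortest prefix of the remaining portion of `y_1^N` with measure at most `θ`, or the
whole remaining portion if there is no such prefix. -/
def auxLen (μ : Measure (ℕ → A)) (θ : ℝ) (N : ℕ) (y : ℕ → A) (p : ℕ) : ℕ :=
  if ∃ ℓ, 1 ≤ ℓ ∧ p + ℓ ≤ N ∧ wp μ (seg y p ℓ) ≤ θ then
    sInf {ℓ | 1 ≤ ℓ ∧ p + ℓ ≤ N ∧ wp μ (seg y p ℓ) ≤ θ}
  else N - p

/-- Starting position of the `j`-th (0-based) word of the auxiliary parsing. -/
def auxPos (μ : Measure (ℕ → A)) (θ : ℝ) (N : ℕ) (y : ℕ → A) : ℕ → ℕ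
  | 0 => 0
  | j + 1 => auxPos μ θ N y j + max 1 (auxLen μ θ N y (auxPos μ θ N y j))

/-- Length of the `j`-th (0-based) word of the auxiliary parsing. -/
def auxWordLen (μ : Measure (ℕ → A)) (θ : ℝ) (N : ℕ) (y : ℕ → A) (j : ℕ) : ℕ :=
  max 1 (auxLen μ θ N y (auxPos μ θ N y j))

/-- The number of words in the auxiliary parsing of `y_1^N`. -/
def auxCount (μ : Measure (ℕ → A)) (θ : ℝ) (N : ℕ) (y : ℕ → A) : ℕ :=
  sInf {c | N ≤ auxPos μ θ N y c}

/-- Length of the next word of the block parsing within a block ending at position `e`: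
the shortest prefix of the remaining portion of the block with measure at most `θ`;
`0` encodes that no such prefix exists (the rest of the block is the buffer). -/
def blkLen (μ : Measure (ℕ → A)) (θ : ℝ) (e : ℕ) (y : ℕ → A) (p : ℕ) : ℕ :=
  sInf {ℓ | 1 ≤ ℓ ∧ p + ℓ ≤ e ∧ wp μ (seg y p ℓ) ≤ θ}

/-- Starting position of the `i`-th (0-based) word of the block starting at `q`, ending at `e`. -/
def blkPos (μ : Measure (ℕ → A)) (θ : ℝ) (e : ℕ) (y : ℕ → A) (q : ℕ) : ℕ → ℕ
  | 0 => q
  | i + 1 => blkPos μ θ e y q i + blkLen μ θ e y (blkPos μ θ e y q i)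

/-- Number `d_s` of words in the block starting at `q` and ending at `e`. -/
def dCount (μ : Measure (ℕ → A)) (θ : ℝ) (e : ℕ) (y : ℕ → A) (q : ℕ) : ℕ :=
  sInf {i | blkLen μ θ e y (blkPos μ θ e y q i) = 0}

/-- The block starting at `q` and ending at `e` is good: its parsed words are pairwise
distinct. -/
def GoodBlock (μ : Measure (ℕ → A)) (θ : ℝ) (e : ℕ) (y : ℕ → A) (q : ℕ) : Prop :=
  ∀ i j : ℕ, i < dCount μ θ e y q → j < dCount μ θ e y q →
    blkLen μ θ e y (blkPos μ θ e y q i) = blkLen μ θ e y (blkPos μ θ e y q j) →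
    (∀ t < blkLen μ θ e y (blkPos μ θ e y q i),
      y (blkPos μ θ e y q i + t) = y (blkPos μ θ e y q j + t)) →
    i = j

end MeasureDefs

/-- The block length `⌊N^α⌋`. -/
def blockB (N : ℕ) (α : ℝ) : ℕ := ⌊(N : ℝ) ^ α⌋₊

/-- The number `M_N` of blocks. -/
def blockM (N : ℕ) (α : ℝ) : ℕ := (N + blockB N α - 1) / blockB N α

/-- The starting position of the `s`-th (0-based) block. -/
def blockStart (N : ℕ) (α : ℝ) (s : ℕ) : ℕ := s * blockB N α

/-- The end position of the `s`-th (0-based) block. -/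
def blockEnd (N : ℕ) (α : ℝ) (s : ℕ) : ℕ := min ((s + 1) * blockB N α) N

/-- `S_b(y_1^N)`: the set of bad blocks of the block auxiliary parsing (with threshold
`N^{-1-ε}`, word probabilities computed with `μ`). -/
def badSet {A : Type*} [MeasurableSpace A] (μ : Measure (ℕ → A)) (N : ℕ) (α ε : ℝ)
    (y : ℕ → A) : Set ℕ :=
  {s | s < blockM N α ∧
    ¬ GoodBlock μ ((N : ℝ) ^ (-1 - ε)) (blockEnd N α s) y (blockStart N α s)}

/-- `ℓ₋ = ln N / (-2 γ₋)`. -/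
def ellMinus (N : ℕ) (γm : ℝ) : ℝ := Real.log N / (-2 * γm)

/-- `ℓ₊ = 2 ln N / (-γ₊)`. -/
def ellPlus (N : ℕ) (γp : ℝ) : ℝ := 2 * Real.log N / (-γp)

/-- `d₊ = 2 N^α / ℓ₋`. -/
def dPlus (N : ℕ) (α γm : ℝ) : ℝ := 2 * (N : ℝ) ^ α / ellMinus N γm

section CrossEntropy

variable {A : Type*} [MeasurableSpace A] [Fintype A]

/-- The `n`-th cross-entropy average `-(1/n) ∑_{a ∈ 𝒜ⁿ} ℚ[a] ln ℙ[a]`, real-valued version. -/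
def hcSeq (μP μQ : Measure (ℕ → A)) (n : ℕ) : ℝ :=
  -(1 / (n : ℝ)) * ∑ a : Fin n → A, wp μQ a * Real.log (wp μP a)

/-- `-ln p` as an element of `[0, ∞]`, for `p ∈ [0, 1]`; equals `⊤` when `p = 0`. -/
def negLog (p : ℝ≥0∞) : ℝ≥0∞ := if p = 0 then ⊤ else ENNReal.ofReal (-Real.log p.toReal)

/-- The `n`-th cross-entropy average, `[0, ∞]`-valued version. -/
def hcSeqE (μP μQ : Measure (ℕ → A)) (n : ℕ) : ℝ≥0∞ :=
  (∑ a : Fin n → A, μQ (cyl a) * negLog (μP (cyl a))) / (n : ℝ≥0∞)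

end CrossEntropy

end ZM

namespace ZM

/-- Prepending a letter to a sequence. -/
def cons {A : Type*} (a : A) (x : ℕ → A) : ℕ → A
  | 0 => a
  | k + 1 => x k

/-- `Ω'` is a one-sided subshift of finite type: the set of sequences avoiding a (finite)
set of forbidden words of a fixed length `m`. -/
def IsSFT {A : Type*} (Ω' : Set (ℕ → A)) : Prop :=
  ∃ (m : ℕ) (F : Set (Fin m → A)), Ω' = {x | ∀ r : ℕ, seg x r m ∉ F}

/-- `Ω'` is topologically transitive: any two words that occur in `Ω'` can be connected by
a third word. -/
def IsTopTransitive {A : Type*} (Ω' : Set (ℕ → A)) : Prop :=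
  ∀ (n m : ℕ) (a : Fin n → A) (b : Fin m → A),
    (cyl a ∩ Ω').Nonempty → (cyl b ∩ Ω').Nonempty →
    ∃ (j : ℕ) (ξ : Fin j → A), (cyl (Fin.append (Fin.append a ξ) b) ∩ Ω').Nonempty

def HasTwoPreimages {A : Type*} (Ω' : Set (ℕ → A)) (x : ℕ → A) : Prop :=
  ∃ a b : A, a ≠ b ∧ cons a x ∈ Ω' ∧ cons b x ∈ Ω'

section Shift

variable {A : Type*}

lemma cons_head_shift (x : ℕ → A) : cons (x 0) (shift x) = x := by
  funext k
  cases k <;> rfl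

lemma seg_shift (x : ℕ → A) (p n : ℕ) : seg (shift x) p n = seg x (p + 1) n := by
  funext i
  simp only [seg, shift, Nat.add_right_comm]

lemma seg_zero_eq_of_mem_cyl {n : ℕ} {a : Fin n → A} {x : ℕ → A} (hx : x ∈ cyl a) :
    seg x 0 n = a := by
  funext i
  simpa [seg] using hx i

lemma IsSFT.mapsTo_shift {Ω' : Set (ℕ → A)} (hΩ : IsSFT Ω') : Set.MapsTo shift Ω' Ω' := by
  obtain ⟨m, F, rfl⟩ := hΩ
  intro x hx r
  rw [seg_shift]
  exact hx (r + 1)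

lemma IsSFT.isClosed [TopologicalSpace A] [DiscreteTopology A] {Ω' : Set (ℕ → A)}
    (hΩ : IsSFT Ω') : IsClosed Ω' := by
  obtain ⟨m, F, rfl⟩ := hΩ
  rw [Set.ofPred_forall]
  exact isClosed_iInter fun r => (isClosed_discrete Fᶜ).preimage (f := fun x => seg x r m)
    (continuous_pi fun i => continuous_apply (r + i))

end Shift

section Measure

variable {A : Type*} [MeasurableSpace A] (μ : Measure (ℕ → A))

lemma wp_nonneg {n : ℕ} (a : Fin n → A) : 0 ≤ wp μ a := ENNReal.toReal_nonneg

lemma wp_le_one [IsProbabilityMeasure μ] {n : ℕ} (a : Fin n → A) : wp μ a ≤ 1 :=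
  ENNReal.toReal_le_of_le_ofReal zero_le_one (by simpa using prob_le_one)

lemma wp_pos [IsFiniteMeasure μ] {n : ℕ} {a : Fin n → A} (h : 0 < μ (cyl a)) : 0 < wp μ a :=
  ENNReal.toReal_pos h.ne' (measure_ne_top μ _)

lemma antitone_wp_seg [IsFiniteMeasure μ] (x : ℕ → A) : Antitone fun n => wp μ (seg x 0 n) :=
  fun _ _ hmn => ENNReal.toReal_mono (measure_ne_top μ _)
    (measure_mono fun _ hz i => hz ⟨i, i.isLt.trans_le hmn⟩)

lemma exists_pos_le_wp [Finite A] [IsFiniteMeasure μ] (n : ℕ) :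
    ∃ c > 0, ∀ a : Fin n → A, 0 < μ (cyl a) → c ≤ wp μ a := by
  have := Fintype.ofFinite A
  by_cases h : ∃ a : Fin n → A, 0 < μ (cyl a)
  · obtain ⟨a, ha⟩ := h
    obtain ⟨a₀, ha₀, hmin⟩ := Finset.exists_min_image
      (Finset.univ.filter fun a : Fin n → A => 0 < μ (cyl a)) (wp μ) ⟨a, by simpa using ha⟩
    refine ⟨wp μ a₀, wp_pos μ (Finset.mem_filter.1 ha₀).2, fun b hb => hmin b ?_⟩
    simpa using hb
  · push Not at h
    exact ⟨1, one_pos, fun a ha => absurd (h a) ha.not_ge⟩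

lemma measure_compl_suppSet [Countable A] : μ (suppSet μ)ᶜ = 0 := by
  refine measure_mono_null (t := ⋃ (n : ℕ) (a : Fin n → A) (_ : μ (cyl a) = 0), cyl a)
    (fun x hx => ?_) (measure_iUnion_null fun n => measure_iUnion_null fun a =>
      measure_iUnion_null fun ha => ha)
  obtain ⟨n, hn⟩ : ∃ n, μ (cyl (seg x 0 n)) = 0 := by simpa [suppSet, pos_iff_ne_zero] using hx
  exact Set.mem_iUnion₂.2 ⟨n, seg x 0 n, Set.mem_iUnion.2 ⟨hn, fun i => by simp [seg]⟩⟩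

lemma exists_mem_suppSet_mem_cyl [Countable A] {n : ℕ} {a : Fin n → A} (h : 0 < μ (cyl a)) :
    ∃ x ∈ suppSet μ, x ∈ cyl a := by
  by_contra! hdisj
  refine h.ne' (measure_mono_null (fun x hx => ?_) (measure_compl_suppSet μ))
  exact fun hx' => hdisj x hx' hx

lemma suppSet_nonempty [Countable A] [NeZero μ] : (suppSet μ).Nonempty := by
  obtain ⟨x, hx, -⟩ := exists_mem_suppSet_mem_cyl μ (a := Fin.elim0)
    (by simpa [cyl] using NeZero.pos (μ Set.univ))
  exact ⟨x, hx⟩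

lemma wp_seg_succ_le [IsFiniteMeasure μ] {x : ℕ → A} (hx : shift x ∈ suppSet μ) {n : ℕ}
    {c ε : ℝ} (h : |wp μ (seg x 0 (n + 1)) / wp μ (seg x 1 n) - c| ≤ ε) :
    wp μ (seg x 0 (n + 1)) ≤ (c + ε) * wp μ (seg (shift x) 0 n) := by
  have hd : 0 < wp μ (seg x 1 n) := by simpa [seg_shift] using wp_pos μ (hx n)
  rw [seg_shift, zero_add, ← div_le_iff₀ hd]
  linarith [(abs_le.1 h).2]

lemma le_wp_seg_succ [IsFiniteMeasure μ] {x : ℕ → A} (hx : shift x ∈ suppSet μ) {n : ℕ}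
    {c ε : ℝ} (h : |wp μ (seg x 0 (n + 1)) / wp μ (seg x 1 n) - c| ≤ ε) :
    (c - ε) * wp μ (seg (shift x) 0 n) ≤ wp μ (seg x 0 (n + 1)) := by
  have hd : 0 < wp μ (seg x 1 n) := by simpa [seg_shift] using wp_pos μ (hx n)
  rw [seg_shift, zero_add, ← le_div_iff₀ hd]
  linarith [(abs_le.1 h).1]

end Measure

section Telescoping

variable {A : Type*} [MeasurableSpace A] (μ : Measure (ℕ → A)) {c : (ℕ → A) → ℝ} {n : ℕ}

lemma wp_seg_add_le_prod_mul {y : ℕ → A} {t : ℕ} (hc : ∀ k < t, 0 ≤ c (shift^[k] y))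
    (hstep : ∀ k < t, ∀ m ≥ n, wp μ (seg (shift^[k] y) 0 (m + 1)) ≤
      c (shift^[k] y) * wp μ (seg (shift (shift^[k] y)) 0 m)) :
    wp μ (seg y 0 (n + t)) ≤
      (∏ k ∈ Finset.range t, c (shift^[k] y)) * wp μ (seg (shift^[t] y) 0 n) := by
  induction t generalizing y with
  | zero => simp
  | succ t ih =>
    have htail := ih (y := shift y) (fun k hk => hc (k + 1) (by omega))
      (fun k hk => hstep (k + 1) (by omega))
    calc wp μ (seg y 0 (n + t + 1))
        ≤ c y * wp μ (seg (shift y) 0 (n + t)) := hstep 0 t.succ_pos (n + t) (Nat.le_add_right n t)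
      _ ≤ c y * ((∏ k ∈ Finset.range t, c (shift^[k + 1] y)) *
            wp μ (seg (shift^[t + 1] y) 0 n)) := mul_le_mul_of_nonneg_left htail (hc 0 t.succ_pos)
      _ = _ := by rw [Finset.prod_range_succ', Function.iterate_zero_apply]; ring

lemma prod_mul_wp_seg_le_wp_seg_add {y : ℕ → A} {t : ℕ} (hc : ∀ k < t, 0 ≤ c (shift^[k] y))
    (hstep : ∀ k < t, ∀ m ≥ n, c (shift^[k] y) * wp μ (seg (shift (shift^[k] y)) 0 m) ≤
      wp μ (seg (shift^[k] y) 0 (m + 1))) :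
    (∏ k ∈ Finset.range t, c (shift^[k] y)) * wp μ (seg (shift^[t] y) 0 n) ≤
      wp μ (seg y 0 (n + t)) := by
  induction t generalizing y with
  | zero => simp
  | succ t ih =>
    have htail := ih (y := shift y) (fun k hk => hc (k + 1) (by omega))
      (fun k hk => hstep (k + 1) (by omega))
    calc (∏ k ∈ Finset.range (t + 1), c (shift^[k] y)) * wp μ (seg (shift^[t + 1] y) 0 n)
        = c y * ((∏ k ∈ Finset.range t, c (shift^[k + 1] y)) *
            wp μ (seg (shift^[t + 1] y) 0 n)) := by
          rw [Finset.prod_range_succ', Function.iterate_zero_apply]; ring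
      _ ≤ c y * wp μ (seg (shift y) 0 (n + t)) := mul_le_mul_of_nonneg_left htail (hc 0 t.succ_pos)
      _ ≤ wp μ (seg y 0 (n + t + 1)) := hstep 0 t.succ_pos (n + t) (Nat.le_add_right n t)

lemma wp_seg_add_mul_le_pow [IsProbabilityMeasure μ] {Ω' : Set (ℕ → A)}
    (hΩ : Set.MapsTo shift Ω' Ω') (hc : ∀ x ∈ Ω', 0 ≤ c x)
    (hstep : ∀ x ∈ Ω', ∀ m ≥ n, wp μ (seg x 0 (m + 1)) ≤ c x * wp μ (seg (shift x) 0 m))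
    {R : ℕ} {ρ : ℝ} (hρ : 0 ≤ ρ) (hwin : ∀ x ∈ Ω', ∏ i ∈ Finset.range R, c (shift^[i] x) ≤ ρ)
    (K : ℕ) {y : ℕ → A} (hy : y ∈ Ω') : wp μ (seg y 0 (n + K * R)) ≤ ρ ^ K := by
  induction K generalizing y with
  | zero => simpa using wp_le_one μ _
  | succ K ih =>
    have hwindow := wp_seg_add_le_prod_mul μ (n := n + K * R) (t := R)
      (fun k _ => hc _ (hΩ.iterate k hy))
      (fun k _ m hm => hstep _ (hΩ.iterate k hy) m (le_of_add_le_left hm))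
    calc wp μ (seg y 0 (n + (K + 1) * R)) = wp μ (seg y 0 (n + K * R + R)) := by
          rw [add_one_mul, add_assoc]
      _ ≤ (∏ i ∈ Finset.range R, c (shift^[i] y)) * wp μ (seg (shift^[R] y) 0 (n + K * R)) :=
        hwindow
      _ ≤ ρ * ρ ^ K := mul_le_mul (hwin y hy) (ih (hΩ.iterate R hy)) (wp_nonneg μ _) hρ
      _ = ρ ^ (K + 1) := by ring

end Telescoping

lemma prod_range_le_pow_mul {f : ℕ → ℝ} {R s : ℕ} {a b : ℝ} (hs : s < R)
    (hf0 : ∀ i < R, 0 ≤ f i) (hfb : ∀ i < R, f i ≤ b) (hfs : f s ≤ a) :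
    ∏ i ∈ Finset.range R, f i ≤ b ^ (R - 1) * a := by
  have hsR := Finset.mem_range.2 hs
  have hrest : ∏ i ∈ (Finset.range R).erase s, f i ≤ b ^ (R - 1) := by
    calc ∏ i ∈ (Finset.range R).erase s, f i ≤ ∏ _i ∈ (Finset.range R).erase s, b :=
          Finset.prod_le_prod (fun i hi => hf0 i (Finset.mem_range.1 (Finset.mem_of_mem_erase hi)))
            (fun i hi => hfb i (Finset.mem_range.1 (Finset.mem_of_mem_erase hi)))
      _ = b ^ (R - 1) := by rw [Finset.prod_const, Finset.card_erase_of_mem hsR, Finset.card_range]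
  rw [← Finset.mul_prod_erase _ _ hsR, mul_comm]
  exact mul_le_mul hrest hfs (hf0 s hs) (pow_nonneg ((hf0 s hs).trans (hfb s hs)) _)

lemma exists_pos_one_add_pow_mul_lt_one {δ : ℝ} (hδ : 0 < δ) (N : ℕ) :
    ∃ ε > 0, (1 + ε) ^ N * (1 - δ + ε) < 1 := by
  have hcont : Continuous fun ε : ℝ => (1 + ε) ^ N * (1 - δ + ε) := by fun_prop
  refine (hcont.continuousAt.eventually_lt (continuousAt_const (y := 1)) ?_).exists_gt
  simpa using hδ

lemma le_exp_of_antitone_of_le_pow {u : ℕ → ℝ} (hu : Antitone u) {ρ : ℝ} (hρ0 : 0 < ρ)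
    (hρ1 : ρ ≤ 1) {R n₀ : ℕ} (hR : 0 < R) (h : ∀ K : ℕ, u (n₀ + K * R) ≤ ρ ^ K) {n : ℕ}
    (hn : 2 * (n₀ + R) ≤ n) : u n ≤ Real.exp (Real.log ρ / (2 * R) * n) := by
  set K := (n - n₀) / R
  have hK : n₀ + K * R ≤ n ∧ n ≤ 2 * (K * R) := by
    have h₁ := Nat.div_mul_le_self (n - n₀) R
    have h₂ := Nat.lt_div_mul_add (a := n - n₀) hR
    generalize K * R = M at *
    omega
  have hKn : (n : ℝ) ≤ 2 * (K * R) := by exact_mod_cast hK.2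
  have hlog := Real.log_nonpos hρ0.le hρ1
  calc u n ≤ u (n₀ + K * R) := hu hK.1
    _ ≤ ρ ^ K := h K
    _ = Real.exp (K * Real.log ρ) := by rw [Real.exp_nat_mul, Real.exp_log hρ0]
    _ ≤ Real.exp (Real.log ρ / (2 * R) * n) := by
      rw [Real.exp_le_exp, div_mul_eq_mul_div, le_div_iff₀ (by positivity)]
      nlinarith

lemma condFE_of_wp_seg_le_pow {A : Type*} [MeasurableSpace A] [Countable A]
    (μ : Measure (ℕ → A)) [IsFiniteMeasure μ] {ρ : ℝ} (hρ0 : 0 < ρ) (hρ1 : ρ < 1) {R n₀ : ℕ}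
    (hR : 0 < R) (h : ∀ y ∈ suppSet μ, ∀ K : ℕ, wp μ (seg y 0 (n₀ + K * R)) ≤ ρ ^ K) :
    CondFE μ (Real.log ρ / (2 * R)) := by
  refine ⟨div_neg_of_neg_of_pos (Real.log_neg hρ0 hρ1) (by positivity), ?_⟩
  filter_upwards [eventually_ge_atTop (2 * (n₀ + R))] with n hn a ha
  obtain ⟨y, hy, hya⟩ := exists_mem_suppSet_mem_cyl μ ha
  rw [← seg_zero_eq_of_mem_cyl hya]
  exact le_exp_of_antitone_of_le_pow (antitone_wp_seg μ y) hρ0 hρ1.le hR (h y hy) hn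

section GMeasure

variable {A : Type*} [Fintype A] {Ω' : Set (ℕ → A)} {g : (ℕ → A) → ℝ}

lemma eq_one_of_not_hasTwoPreimages
    (hgsum : ∀ x ∈ Ω', (∑ a : A, if cons a x ∈ Ω' then g (cons a x) else 0) = 1)
    {x : ℕ → A} (hx : x ∈ Ω') (hTx : shift x ∈ Ω') (h : ¬HasTwoPreimages Ω' (shift x)) :
    g x = 1 := by
  have hsum := hgsum _ hTx
  rwa [Finset.sum_eq_single (x 0)
      (fun b _ hb => if_neg fun hb' => h ⟨b, x 0, hb, hb', (cons_head_shift x).symm ▸ hx⟩)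
      (by simp), cons_head_shift, if_pos hx] at hsum

lemma le_one_sub_of_hasTwoPreimages {δ : ℝ} (hδ0 : 0 ≤ δ) (hδ : ∀ x ∈ Ω', δ ≤ g x)
    (hgsum : ∀ x ∈ Ω', (∑ a : A, if cons a x ∈ Ω' then g (cons a x) else 0) = 1)
    {x : ℕ → A} (hx : x ∈ Ω') (hTx : shift x ∈ Ω') (h : HasTwoPreimages Ω' (shift x)) :
    g x ≤ 1 - δ := by
  obtain ⟨a, b, hab, ha, hb⟩ := h
  obtain ⟨c, hc, hcx⟩ : ∃ c, cons c (shift x) ∈ Ω' ∧ c ≠ x 0 := by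
    by_cases hax : a = x 0
    · exact ⟨b, hb, hax ▸ hab.symm⟩
    · exact ⟨a, ha, hax⟩
  have hpair := Finset.sum_le_sum_of_subset_of_nonneg (Finset.subset_univ {x 0, c})
    (f := fun e => if cons e (shift x) ∈ Ω' then g (cons e (shift x)) else 0)
    (fun e _ _ => by split_ifs with he; exacts [hδ0.trans (hδ _ he), le_rfl])
  rw [Finset.sum_pair hcx.symm, hgsum _ hTx, if_pos hc, cons_head_shift, if_pos hx] at hpair
  linarith [hδ _ hc]

variable [MeasurableSpace A] (μ : Measure (ℕ → A))

lemma pow_mul_wp_seg_le_of_not_hasTwoPreimages [IsFiniteMeasure μ]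
    (hΩ : Set.MapsTo shift Ω' Ω') (hsupp : Ω' ⊆ suppSet μ)
    (hgsum : ∀ x ∈ Ω', (∑ a : A, if cons a x ∈ Ω' then g (cons a x) else 0) = 1)
    {θ : ℝ} (hθ : 0 ≤ θ) {n₀ : ℕ}
    (hconv : ∀ m ≥ n₀, ∀ x ∈ Ω', |wp μ (seg x 0 (m + 1)) / wp μ (seg x 1 m) - g x| ≤ 1 - θ)
    {y : ℕ → A} (hy : y ∈ Ω') {r : ℕ}
    (hr : ∀ t, 1 ≤ t → t ≤ r → ¬HasTwoPreimages Ω' (shift^[t] y)) :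
    θ ^ r * wp μ (seg (shift^[r] y) 0 n₀) ≤ wp μ (seg y 0 (n₀ + r)) := by
  have hg : ∀ k < r, g (shift^[k] y) = 1 := fun k hk =>
    eq_one_of_not_hasTwoPreimages hgsum (hΩ.iterate k hy) (hΩ (hΩ.iterate k hy))
      (by rw [← Function.iterate_succ_apply' shift]; exact hr (k + 1) (by omega) (by omega))
  have hprod : ∏ k ∈ Finset.range r, (g (shift^[k] y) - (1 - θ)) = θ ^ r := by
    rw [Finset.prod_congr rfl fun k hk => by rw [hg k (Finset.mem_range.1 hk), sub_sub_cancel]]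
    simp
  rw [← hprod]
  exact prod_mul_wp_seg_le_wp_seg_add μ (c := fun x => g x - (1 - θ))
    (fun k hk => by simp only [hg k hk, sub_sub_cancel, hθ])
    (fun k _ m hm => le_wp_seg_succ μ (hsupp (hΩ (hΩ.iterate k hy)))
      (hconv m hm _ (hΩ.iterate k hy)))

theorem exists_hasTwoPreimages_of_condFE [IsFiniteMeasure μ] (hΩ : Set.MapsTo shift Ω' Ω')
    (hsupp : Ω' ⊆ suppSet μ)
    (hgsum : ∀ x ∈ Ω', (∑ a : A, if cons a x ∈ Ω' then g (cons a x) else 0) = 1)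
    (hgconv : ∀ δ : ℝ, 0 < δ → ∀ᶠ n : ℕ in atTop, ∀ x ∈ Ω',
      |wp μ (seg x 0 (n + 1)) / wp μ (seg x 1 n) - g x| ≤ δ)
    {γ : ℝ} (hFE : CondFE μ γ) :
    ∃ r : ℕ, ∀ y ∈ Ω', ∃ t : ℕ, 1 ≤ t ∧ t ≤ r ∧ HasTwoPreimages Ω' (shift^[t] y) := by
  obtain ⟨hγ, hFE⟩ := hFE
  -- `exp (γ n) = θ ^ (2 n)`, whereas a non-branching orbit loses only a factor `θ` per letter.
  set θ := Real.exp (γ / 2) with hθ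
  have hθ0 : 0 < θ := Real.exp_pos _
  have hθ1 : θ < 1 := Real.exp_lt_one_iff.2 (by linarith)
  obtain ⟨n₀, hn₀⟩ := (hgconv (1 - θ) (by linarith)).exists_forall_of_atTop
  obtain ⟨n₁, hn₁⟩ := hFE.exists_forall_of_atTop
  obtain ⟨c₀, hc₀, hc₀le⟩ := exists_pos_le_wp μ n₀
  by_contra! hcon
  have hsmall : ∀ r ≥ n₁, c₀ ≤ θ ^ r := by
    intro r hr
    obtain ⟨y, hy, hy'⟩ := hcon r
    have hexp : Real.exp (γ * (n₀ + r : ℕ)) ≤ θ ^ r * θ ^ r := by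
      rw [← pow_add, hθ, ← Real.exp_nat_mul, Real.exp_le_exp]
      push_cast
      nlinarith [(Nat.cast_nonneg n₀ : (0 : ℝ) ≤ n₀)]
    refine le_of_mul_le_mul_left ?_ (pow_pos hθ0 r)
    calc θ ^ r * c₀ ≤ θ ^ r * wp μ (seg (shift^[r] y) 0 n₀) :=
          mul_le_mul_of_nonneg_left (hc₀le _ (hsupp (hΩ.iterate r hy) n₀)) (by positivity)
      _ ≤ wp μ (seg y 0 (n₀ + r)) :=
          pow_mul_wp_seg_le_of_not_hasTwoPreimages μ hΩ hsupp hgsum hθ0.le hn₀ hy hy'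
      _ ≤ Real.exp (γ * (n₀ + r : ℕ)) := hn₁ (n₀ + r) (by omega) _ (hsupp hy _)
      _ ≤ θ ^ r * θ ^ r := hexp
  obtain ⟨r, hr, hlt⟩ := ((eventually_ge_atTop n₁).and
    ((tendsto_pow_atTop_nhds_zero_of_lt_one hθ0.le hθ1).eventually (gt_mem_nhds hc₀))).exists
  exact (hsmall r hr).not_gt hlt

theorem exists_condFE_of_hasTwoPreimages [TopologicalSpace A] [DiscreteTopology A]
    [IsProbabilityMeasure μ] (hΩ : IsSFT Ω') (hsupp : suppSet μ = Ω') (hgcont : ContinuousOn g Ω')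
    (hgrange : ∀ x ∈ Ω', 0 < g x ∧ g x ≤ 1)
    (hgsum : ∀ x ∈ Ω', (∑ a : A, if cons a x ∈ Ω' then g (cons a x) else 0) = 1)
    (hgconv : ∀ δ : ℝ, 0 < δ → ∀ᶠ n : ℕ in atTop, ∀ x ∈ Ω',
      |wp μ (seg x 0 (n + 1)) / wp μ (seg x 1 n) - g x| ≤ δ)
    {r : ℕ} (hr : ∀ y ∈ Ω', ∃ t : ℕ, 1 ≤ t ∧ t ≤ r ∧ HasTwoPreimages Ω' (shift^[t] y)) :
    ∃ γ : ℝ, CondFE μ γ := by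
  have hmaps := hΩ.mapsTo_shift
  obtain ⟨x₀, hx₀, hmin⟩ :=
    hΩ.isClosed.isCompact.exists_isMinOn (hsupp ▸ suppSet_nonempty μ) hgcont
  obtain ⟨hδ0, hδ1⟩ := hgrange x₀ hx₀
  have hdrop : ∀ y ∈ Ω', ∃ s < r, g (shift^[s] y) ≤ 1 - g x₀ := by
    intro y hy
    obtain ⟨t, ht1, htr, ht⟩ := hr y hy
    obtain ⟨s, rfl⟩ := Nat.exists_eq_add_of_le' ht1
    rw [Function.iterate_succ_apply'] at ht
    exact ⟨s, by omega, le_one_sub_of_hasTwoPreimages hδ0.le (fun x hx => hmin hx) hgsum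
      (hmaps.iterate s hy) (hmaps (hmaps.iterate s hy)) ht⟩
  have hr0 : 0 < r := by
    obtain ⟨s, hs, -⟩ := hdrop x₀ hx₀
    omega
  obtain ⟨ε, hε, hρ1⟩ := exists_pos_one_add_pow_mul_lt_one hδ0 (r - 1)
  have hρ0 : 0 < (1 + ε) ^ (r - 1) * (1 - g x₀ + ε) :=
    mul_pos (by positivity) (by linarith)
  obtain ⟨n₀, hn₀⟩ := (hgconv ε hε).exists_forall_of_atTop
  refine ⟨_, condFE_of_wp_seg_le_pow μ hρ0 hρ1 hr0 (n₀ := n₀) fun y hy K => ?_⟩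
  refine wp_seg_add_mul_le_pow μ hmaps (c := fun x => g x + ε)
    (fun x hx => by linarith [(hgrange x hx).1])
    (fun x hx m hm => wp_seg_succ_le μ (hsupp.superset (hmaps hx)) (hn₀ m hm x hx))
    hρ0.le (fun x hx => ?_) K (hsupp.subset hy)
  obtain ⟨s, hs, hgs⟩ := hdrop x hx
  exact prod_range_le_pow_mul hs (fun i _ => by linarith [(hgrange _ (hmaps.iterate i hx)).1])
    (fun i _ => by linarith [(hgrange _ (hmaps.iterate i hx)).2]) (by linarith)

end GMeasure

theorem gmeasure_FE_iff_general {A : Type*} [Fintype A] [MeasurableSpace A]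
    [TopologicalSpace A] [DiscreteTopology A]
    (Ω' : Set (ℕ → A)) (hSFT : IsSFT Ω')
    (μ : Measure (ℕ → A)) [IsProbabilityMeasure μ]
    (hsupp : suppSet μ = Ω')
    (g : (ℕ → A) → ℝ) (hgcont : ContinuousOn g Ω')
    (hgrange : ∀ x ∈ Ω', 0 < g x ∧ g x ≤ 1)
    (hgsum : ∀ x ∈ Ω', (∑ a : A, if cons a x ∈ Ω' then g (cons a x) else 0) = 1)
    (hgconv : ∀ δ : ℝ, 0 < δ → ∀ᶠ n : ℕ in atTop, ∀ x ∈ Ω',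
      |wp μ (seg x 0 (n + 1)) / wp μ (seg x 1 n) - g x| ≤ δ) :
    (∃ γp : ℝ, CondFE μ γp) ↔
      ∃ r : ℕ, ∀ y ∈ Ω', ∃ t : ℕ, 1 ≤ t ∧ t ≤ r ∧
        ∃ a b : A, a ≠ b ∧ cons a (shift^[t] y) ∈ Ω' ∧ cons b (shift^[t] y) ∈ Ω' :=
  ⟨fun ⟨_, hFE⟩ => exists_hasTwoPreimages_of_condFE μ hSFT.mapsTo_shift hsupp.superset hgsum
      hgconv hFE,
    fun ⟨_, hr⟩ => exists_condFE_of_hasTwoPreimages μ hSFT hsupp hgcont hgrange hgsum hgconv hr⟩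

/-- **Lemma 4.1.** A regular g-measure on a topologically transitive subshift of finite
type `Ω'` satisfies (FE) iff there exists `r` such that every `y ∈ Ω'` has some
`t ∈ {1, …, r}` for which `T^t y` has more than one preimage in `Ω'` under the shift. -/
theorem gmeasure_FE_iff {A : Type*} [Fintype A] [MeasurableSpace A]
    [TopologicalSpace A] [DiscreteTopology A]
    (Ω' : Set (ℕ → A)) (hSFT : IsSFT Ω') (htrans : IsTopTransitive Ω')
    (μ : Measure (ℕ → A)) [IsProbabilityMeasure μ]
    (hstat : MeasurePreserving shift μ μ)
    (hsupp : suppSet μ = Ω')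
    (g : (ℕ → A) → ℝ) (hgcont : ContinuousOn g Ω')
    (hgrange : ∀ x ∈ Ω', 0 < g x ∧ g x ≤ 1)
    (hgsum : ∀ x ∈ Ω', (∑ a : A, if cons a x ∈ Ω' then g (cons a x) else 0) = 1)
    (hgconv : ∀ δ : ℝ, 0 < δ → ∀ᶠ n : ℕ in atTop, ∀ x ∈ Ω',
      |wp μ (seg x 0 (n + 1)) / wp μ (seg x 1 n) - g x| ≤ δ) :
    (∃ γp : ℝ, CondFE μ γp) ↔
      ∃ r : ℕ, ∀ y ∈ Ω', ∃ t : ℕ, 1 ≤ t ∧ t ≤ r ∧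
        ∃ a b : A, a ≠ b ∧ cons a (shift^[t] y) ∈ Ω' ∧ cons b (shift^[t] y) ∈ Ω' :=
  gmeasure_FE_iff_general Ω' hSFT μ hsupp g hgcont hgrange hgsum hgconv

end ZM
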